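/- Let (B, ≺) be a compingent algebra satisfying (S9): a ≺ b implies there is c with c ≺ c and a ≺ c ≺ b. Let C be a complete Boolean algebra and e : B → C an injective Boolean algebra homomorphism whose image is both join-dense and meet-dense in C (so that C is the MacNeille completion of B). Define on C: α ≺' β iff there exist a, b ∈ B with a ≺ b, α ≤ e(a), and e(b) ≤ β. Then (C, ≺') is a de Vries algebra satisfying (S9): α ≺' β implies there is γ ∈ C with γ ≺' γ and α ≺' γ ≺' β. -/

import Mathlib

/-- A contact algebra: a Boolean algebra `B` with a binary relation `prec`
satisfying (S1)-(S6). -/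
structure ContactAlgebra (B : Type*) [BooleanAlgebra B] where
  prec : B → B → Prop
  s1_bot : prec ⊥ ⊥
  s1_top : prec ⊤ ⊤
  s2 : ∀ a b c : B, prec a b → prec a c → prec a (b ⊓ c)
  s3 : ∀ a b c : B, prec a c → prec b c → prec (a ⊔ b) c
  s4 : ∀ a b c d : B, a ≤ b → prec b c → c ≤ d → prec a d
  s5 : ∀ a b : B, prec a b → a ≤ b
  s6 : ∀ a b : B, prec a b → prec bᶜ aᶜ

/-- A compingent algebra: a contact algebra satisfying (S7) and (S8). -/
structure CompingentAlgebra (B : Type*) [BooleanAlgebra B] extends ContactAlgebra B where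
  s7 : ∀ a b : B, prec a b → ∃ c : B, prec a c ∧ prec c b
  s8 : ∀ a : B, a ≠ ⊥ → ∃ b : B, b ≠ ⊥ ∧ prec b a

/-- The proximity on the MacNeille completion:
`α ≺' β` iff there are `a ≺ b` in `B` with `α ≤ e a` and `e b ≤ β`. -/
def MacNeillePrec {B C : Type*} [BooleanAlgebra B] [CompleteBooleanAlgebra C]
    (prec : B → B → Prop) (e : B → C) (α β : C) : Prop :=
  ∃ a b : B, prec a b ∧ α ≤ e a ∧ e b ≤ β

/-!
Every clause is inherited from `(B, ≺)` along `e`: a witness `a ≺ b` for `α ≺' β` is combined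
with the corresponding witnesses using that `e` preserves `⊓`, `⊔` and `ᶜ`, and interpolants in `B`
are pushed forward to interpolants in `C`. For (S8), join-density puts a nonzero `e a` below a
nonzero `α ∈ C`, and then any nonzero `b ≺ a` gives `e b ≺' α`.
-/

theorem monotone_of_map_sup {α β : Type*} [SemilatticeSup α] [SemilatticeSup β] {f : α → β}
    (hf : ∀ a b, f (a ⊔ b) = f a ⊔ f b) : Monotone f :=
  fun a b hab => le_sup_left.trans_eq (by rw [← hf, sup_eq_right.2 hab])

theorem exists_le_ne_bot_of_joinDense {B C : Type*} [CompleteLattice C] {e : B → C}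
    (he : ∀ γ : C, γ = sSup {x : C | (∃ a : B, x = e a) ∧ x ≤ γ}) {γ : C} (hγ : γ ≠ ⊥) :
    ∃ a : B, e a ≤ γ ∧ e a ≠ ⊥ := by
  by_contra! h
  apply hγ
  rw [he γ, sSup_eq_bot]
  rintro _ ⟨⟨a, rfl⟩, ha⟩
  exact h a ha

namespace MacNeillePrec

variable {B C : Type*} [BooleanAlgebra B] [CompleteBooleanAlgebra C] {prec : B → B → Prop}
  {e : B → C} {α β γ δ : C}

theorem of_prec {a b : B} (h : prec a b) : MacNeillePrec prec e (e a) (e b) :=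
  ⟨a, b, h, le_rfl, le_rfl⟩

theorem mono (hαβ : α ≤ β) (h : MacNeillePrec prec e β γ) (hγδ : γ ≤ δ) :
    MacNeillePrec prec e α δ :=
  let ⟨a, b, hab, hβ, hγ⟩ := h
  ⟨a, b, hab, hαβ.trans hβ, hγ.trans hγδ⟩

theorem le (A : ContactAlgebra B) (he : Monotone e) (h : MacNeillePrec A.prec e α β) : α ≤ β :=
  let ⟨_, _, hab, hα, hβ⟩ := h
  hα.trans ((he (A.s5 _ _ hab)).trans hβ)

theorem inf_right (A : ContactAlgebra B) (he : ∀ a b, e (a ⊓ b) = e a ⊓ e b)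
    (hβ : MacNeillePrec A.prec e α β) (hγ : MacNeillePrec A.prec e α γ) :
    MacNeillePrec A.prec e α (β ⊓ γ) := by
  obtain ⟨a, b, hab, hαa, hbβ⟩ := hβ
  obtain ⟨a', b', hab', hαa', hb'γ⟩ := hγ
  refine ⟨a ⊓ a', b ⊓ b', ?_, he a a' ▸ le_inf hαa hαa', he b b' ▸ inf_le_inf hbβ hb'γ⟩
  exact A.s2 _ _ _ (A.s4 _ _ _ _ inf_le_left hab le_rfl) (A.s4 _ _ _ _ inf_le_right hab' le_rfl)

theorem sup_left (A : ContactAlgebra B) (he : ∀ a b, e (a ⊔ b) = e a ⊔ e b)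
    (hα : MacNeillePrec A.prec e α γ) (hβ : MacNeillePrec A.prec e β γ) :
    MacNeillePrec A.prec e (α ⊔ β) γ := by
  obtain ⟨a, b, hab, hαa, hbγ⟩ := hα
  obtain ⟨a', b', hab', hβa', hb'γ⟩ := hβ
  refine ⟨a ⊔ a', b ⊔ b', ?_, he a a' ▸ sup_le_sup hαa hβa', he b b' ▸ sup_le hbγ hb'γ⟩
  exact A.s3 _ _ _ (A.s4 _ _ _ _ le_rfl hab le_sup_left) (A.s4 _ _ _ _ le_rfl hab' le_sup_right)

theorem compl (A : ContactAlgebra B) (he : ∀ a, e aᶜ = (e a)ᶜ) (h : MacNeillePrec A.prec e α β) :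
    MacNeillePrec A.prec e βᶜ αᶜ :=
  let ⟨a, b, hab, hα, hβ⟩ := h
  ⟨bᶜ, aᶜ, A.s6 _ _ hab, he b ▸ compl_le_compl hβ, he a ▸ compl_le_compl hα⟩

theorem exists_interpolant (hprec : ∀ a b, prec a b → ∃ c, prec a c ∧ prec c b)
    (h : MacNeillePrec prec e α β) :
    ∃ γ, MacNeillePrec prec e α γ ∧ MacNeillePrec prec e γ β :=
  let ⟨a, b, hab, hα, hβ⟩ := h
  let ⟨c, hac, hcb⟩ := hprec a b hab
  ⟨e c, mono hα (of_prec hac) le_rfl, mono le_rfl (of_prec hcb) hβ⟩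

theorem exists_reflexive_interpolant
    (hprec : ∀ a b, prec a b → ∃ c, prec c c ∧ prec a c ∧ prec c b)
    (h : MacNeillePrec prec e α β) :
    ∃ γ, MacNeillePrec prec e γ γ ∧ MacNeillePrec prec e α γ ∧ MacNeillePrec prec e γ β :=
  let ⟨a, b, hab, hα, hβ⟩ := h
  let ⟨c, hcc, hac, hcb⟩ := hprec a b hab
  ⟨e c, of_prec hcc, mono hα (of_prec hac) le_rfl, mono le_rfl (of_prec hcb) hβ⟩

theorem exists_ne_bot (hprec : ∀ a : B, a ≠ ⊥ → ∃ b, b ≠ ⊥ ∧ prec b a)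
    (he_inj : Function.Injective e) (he_bot : e ⊥ = ⊥)
    (he_dense : ∀ γ : C, γ = sSup {x : C | (∃ a : B, x = e a) ∧ x ≤ γ}) (hα : α ≠ ⊥) :
    ∃ β, β ≠ ⊥ ∧ MacNeillePrec prec e β α := by
  obtain ⟨a, haα, ha⟩ := exists_le_ne_bot_of_joinDense he_dense hα
  obtain ⟨b, hb, hba⟩ := hprec a ((he_inj.ne_iff' he_bot).1 ha)
  exact ⟨e b, (he_inj.ne_iff' he_bot).2 hb, mono le_rfl (of_prec hba) haα⟩

end MacNeillePrec

open MacNeillePrec in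
theorem macNeille_zerodimensional_general
    {B C : Type*} [BooleanAlgebra B] [CompleteBooleanAlgebra C]
    (A : CompingentAlgebra B)
    -- `(B, ≺)` satisfies (S9):
    (hS9 : ∀ a b : B, A.prec a b → ∃ c : B, A.prec c c ∧ A.prec a c ∧ A.prec c b)
    -- `e : B → C` is an injective Boolean algebra homomorphism:
    (e : B → C) (heInj : Function.Injective e)
    (heBot : e ⊥ = ⊥) (heTop : e ⊤ = ⊤)
    (heInf : ∀ a b : B, e (a ⊓ b) = e a ⊓ e b)
    (heSup : ∀ a b : B, e (a ⊔ b) = e a ⊔ e b)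
    (heCompl : ∀ a : B, e aᶜ = (e a)ᶜ)
    -- the image of `e` is join-dense and meet-dense in `C`:
    (heJoinDense : ∀ γ : C, γ = sSup {x : C | (∃ a : B, x = e a) ∧ x ≤ γ}) :
    -- `(C, ≺')` is a contact algebra:
    (MacNeillePrec A.prec e ⊥ ⊥ ∧ MacNeillePrec A.prec e ⊤ ⊤) ∧
    (∀ α β γ : C, MacNeillePrec A.prec e α β → MacNeillePrec A.prec e α γ →
        MacNeillePrec A.prec e α (β ⊓ γ)) ∧
    (∀ α β γ : C, MacNeillePrec A.prec e α γ → MacNeillePrec A.prec e β γ →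
        MacNeillePrec A.prec e (α ⊔ β) γ) ∧
    (∀ α β γ δ : C, α ≤ β → MacNeillePrec A.prec e β γ → γ ≤ δ →
        MacNeillePrec A.prec e α δ) ∧
    (∀ α β : C, MacNeillePrec A.prec e α β → α ≤ β) ∧
    (∀ α β : C, MacNeillePrec A.prec e α β → MacNeillePrec A.prec e βᶜ αᶜ) ∧
    -- `(C, ≺')` is compingent (hence, `C` being complete, a de Vries algebra):
    (∀ α β : C, MacNeillePrec A.prec e α β →
        ∃ γ : C, MacNeillePrec A.prec e α γ ∧ MacNeillePrec A.prec e γ β) ∧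
    (∀ α : C, α ≠ ⊥ → ∃ β : C, β ≠ ⊥ ∧ MacNeillePrec A.prec e β α) ∧
    -- `(C, ≺')` satisfies (S9):
    (∀ α β : C, MacNeillePrec A.prec e α β →
        ∃ γ : C, MacNeillePrec A.prec e γ γ ∧
          MacNeillePrec A.prec e α γ ∧ MacNeillePrec A.prec e γ β) :=
  ⟨⟨⟨⊥, ⊥, A.s1_bot, bot_le, heBot.le⟩, ⟨⊤, ⊤, A.s1_top, heTop.ge, le_top⟩⟩,
    fun _ _ _ => inf_right A.toContactAlgebra heInf,
    fun _ _ _ => sup_left A.toContactAlgebra heSup,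
    fun _ _ _ _ => mono,
    fun _ _ => le A.toContactAlgebra (monotone_of_map_sup heSup),
    fun _ _ => compl A.toContactAlgebra heCompl,
    fun _ _ => exists_interpolant A.s7,
    fun _ => exists_ne_bot A.s8 heInj heBot heJoinDense,
    fun _ _ => exists_reflexive_interpolant hS9⟩

/-- The MacNeille completion of a compingent algebra satisfying (S9) is a de Vries
algebra satisfying (S9) (i.e., it is zerodimensional). -/
theorem macNeille_zerodimensional
    {B C : Type*} [BooleanAlgebra B] [CompleteBooleanAlgebra C]
    (A : CompingentAlgebra B)
    -- `(B, ≺)` satisfies (S9):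
    (hS9 : ∀ a b : B, A.prec a b → ∃ c : B, A.prec c c ∧ A.prec a c ∧ A.prec c b)
    -- `e : B → C` is an injective Boolean algebra homomorphism:
    (e : B → C) (heInj : Function.Injective e)
    (heBot : e ⊥ = ⊥) (heTop : e ⊤ = ⊤)
    (heInf : ∀ a b : B, e (a ⊓ b) = e a ⊓ e b)
    (heSup : ∀ a b : B, e (a ⊔ b) = e a ⊔ e b)
    (heCompl : ∀ a : B, e aᶜ = (e a)ᶜ)
    -- the image of `e` is join-dense and meet-dense in `C`:
    (heJoinDense : ∀ γ : C, γ = sSup {x : C | (∃ a : B, x = e a) ∧ x ≤ γ})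
    (heMeetDense : ∀ γ : C, γ = sInf {x : C | (∃ a : B, x = e a) ∧ γ ≤ x}) :
    -- `(C, ≺')` is a contact algebra:
    (MacNeillePrec A.prec e ⊥ ⊥ ∧ MacNeillePrec A.prec e ⊤ ⊤) ∧
    (∀ α β γ : C, MacNeillePrec A.prec e α β → MacNeillePrec A.prec e α γ →
        MacNeillePrec A.prec e α (β ⊓ γ)) ∧
    (∀ α β γ : C, MacNeillePrec A.prec e α γ → MacNeillePrec A.prec e β γ →
        MacNeillePrec A.prec e (α ⊔ β) γ) ∧
    (∀ α β γ δ : C, α ≤ β → MacNeillePrec A.prec e β γ → γ ≤ δ →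
        MacNeillePrec A.prec e α δ) ∧
    (∀ α β : C, MacNeillePrec A.prec e α β → α ≤ β) ∧
    (∀ α β : C, MacNeillePrec A.prec e α β → MacNeillePrec A.prec e βᶜ αᶜ) ∧
    -- `(C, ≺')` is compingent (hence, `C` being complete, a de Vries algebra):
    (∀ α β : C, MacNeillePrec A.prec e α β →
        ∃ γ : C, MacNeillePrec A.prec e α γ ∧ MacNeillePrec A.prec e γ β) ∧
    (∀ α : C, α ≠ ⊥ → ∃ β : C, β ≠ ⊥ ∧ MacNeillePrec A.prec e β α) ∧
    -- `(C, ≺')` satisfies (S9):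
    (∀ α β : C, MacNeillePrec A.prec e α β →
        ∃ γ : C, MacNeillePrec A.prec e γ γ ∧
          MacNeillePrec A.prec e α γ ∧ MacNeillePrec A.prec e γ β) :=
  macNeille_zerodimensional_general A hS9 e heInj heBot heTop heInf heSup heCompl heJoinDense
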